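/- Let S be a subgroup of the circle group 𝕋 = ℝ/ℤ. Identify each t ∈ 𝕋 with the character of ℤ given by n ↦ n·t, and let τ_S denote the coarsest topology on ℤ making all characters n ↦ n·t with t ∈ S continuous. Then for every integer k ≥ 1, the subgroup kℤ is closed in (ℤ, τ_S) if and only if the class of 1/k in ℝ/ℤ belongs to S. -/

import Mathlib

/-- The coarsest topology on `ℤ` making every character `n ↦ n • t`, `t ∈ S`,
continuous. -/
noncomputable def tauZ (S : AddSubgroup (AddCircle (1 : ℝ))) : TopologicalSpace ℤ :=
  ⨅ t ∈ S, TopologicalSpace.induced (fun n : ℤ => n • t) inferInstance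

/-!
If `1/k ∈ S`, then `kℤ` is the kernel of the `τ_S`-continuous character `n ↦ n/k`, so it is
closed. Conversely, `τ_S` is induced by `n ↦ (n t)_{t ∈ S}` into the compact group `𝕋^S`, so `e`
lies in the `τ_S`-closure of `kℤ` as soon as `(e t)_t` lies in the closure of the multiples of
`(k t)_t`. By Kronecker's theorem (if every character killing `x` kills `y`, then `y ∈ cl(ℤx)`)
this holds whenever `e` kills every `k`-torsion element of `S`. On a finite torus, Kronecker's
theorem follows by comparing the Haar measure of `H = cl(ℤx)` with its translate by `y`: a
character is either trivial on `H`, hence at `y`, or integrates to `0` over `H`, so the two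
measures integrate every character equally and coincide by Stone–Weierstrass, yet they give `H`
masses `1` and `0` when `y ∉ H`. Finally, writing `{j | j/k ∈ S} = dℤ` and `k = d e`, this `e`
kills the `k`-torsion of `S`, so closedness of `kℤ` forces `k ∣ e`, i.e. `d = ±1`, i.e. `1/k ∈ S`.
-/
open MeasureTheory Topology

namespace ContinuousMap

variable {X : Type*} [TopologicalSpace X] [CompactSpace X] [MeasurableSpace X] [BorelSpace X]

noncomputable def integralCLM (μ : Measure X) [IsFiniteMeasure μ] : C(X, ℂ) →L[ℂ] ℂ :=
  (L1.integralCLM' ℂ).comp (toLp 1 μ ℂ)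

lemma integralCLM_apply (μ : Measure X) [IsFiniteMeasure μ] (f : C(X, ℂ)) :
    integralCLM μ f = ∫ x, f x ∂μ := by
  rw [← integral_congr_ae (coeFn_toLp (p := 1) μ (𝕜 := ℂ) f), ← L1.integral_eq_integral,
    L1.integral_eq' ℂ]
  rfl

end ContinuousMap

namespace MeasureTheory.Measure

variable {X : Type*} [TopologicalSpace X] [CompactSpace X] [HasOuterApproxClosed X]
  [MeasurableSpace X] [BorelSpace X]

theorem ext_of_integral_eq_of_dense_span {μ ν : Measure X} [IsFiniteMeasure μ]
    [IsFiniteMeasure ν] {s : Set C(X, ℂ)} (hs : Dense (Submodule.span ℂ s : Set C(X, ℂ)))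
    (h : ∀ f ∈ s, ∫ x, f x ∂μ = ∫ x, f x ∂ν) : μ = ν := by
  have hL : ContinuousMap.integralCLM μ = ContinuousMap.integralCLM ν :=
    ContinuousLinearMap.ext_on hs fun f hf => by
      simp only [ContinuousMap.integralCLM_apply, h f hf]
  refine ext_of_forall_integral_eq_of_IsFiniteMeasure fun f => ?_
  have := congr($hL ⟨fun x => (f x : ℂ), by fun_prop⟩)
  simp only [ContinuousMap.integralCLM_apply, ContinuousMap.coe_mk] at this
  exact_mod_cast this

end MeasureTheory.Measure

namespace UnitAddTorus

variable {d : Type*} [Fintype d]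

lemma mFourier_apply_eq_toCircle (n : d → ℤ) (z : UnitAddTorus d) :
    mFourier n z = AddCircle.toCircle (∑ i, n i • z i) := by
  classical
  simp only [mFourier, ContinuousMap.coe_mk, fourier_apply]
  induction (Finset.univ : Finset d) using Finset.induction_on with
  | empty => simp
  | insert i s hi ih =>
    simp [Finset.prod_insert hi, Finset.sum_insert hi, ih, AddCircle.toCircle_add]

lemma mFourier_apply_eq_one_iff (n : d → ℤ) (z : UnitAddTorus d) :
    mFourier n z = 1 ↔ ∑ i, n i • z i = 0 := by
  rw [mFourier_apply_eq_toCircle, Circle.coe_eq_one, ← AddCircle.toCircle_zero (T := 1)]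
  exact (AddCircle.injective_toCircle one_ne_zero).eq_iff

lemma mFourier_apply_add (n : d → ℤ) (z w : UnitAddTorus d) :
    mFourier n (z + w) = mFourier n z * mFourier n w := by
  simp only [mFourier_apply_eq_toCircle, Pi.add_apply, smul_add, Finset.sum_add_distrib,
    AddCircle.toCircle_add, Circle.coe_mul]

theorem mem_closure_zmultiples_of_forall_sum_eq_zero {x y : UnitAddTorus d}
    (h : ∀ n : d → ℤ, ∑ i, n i • x i = 0 → ∑ i, n i • y i = 0) :
    y ∈ closure (AddSubgroup.zmultiples x : Set (UnitAddTorus d)) := by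
  set H := (AddSubgroup.zmultiples x).topologicalClosure
  by_contra hy
  have hxH : x ∈ H := subset_closure (AddSubgroup.mem_zmultiples x)
  have hH : IsClosed (H : Set (UnitAddTorus d)) := AddSubgroup.isClosed_topologicalClosure _
  have : CompactSpace H := isCompact_iff_compactSpace.mp hH.isCompact
  borelize ↥H
  let μ : Measure H := Measure.addHaarMeasure ⊤
  have : IsProbabilityMeasure μ := ⟨Measure.addHaarMeasure_self⟩
  have hchar (n : d → ℤ) : ∫ h : H, mFourier n (h + y) ∂μ = ∫ h : H, mFourier n h ∂μ := by
    simp_rw [mFourier_apply_add]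
    rw [integral_mul_const]
    by_cases hI : ∫ h : H, mFourier n h ∂μ = 0
    · simp [hI]
    have hx : mFourier n x = 1 := by
      have := integral_add_right_eq_self (μ := μ) (fun h : H => mFourier n h) ⟨x, hxH⟩
      simp_rw [AddSubgroup.coe_add, mFourier_apply_add, integral_mul_const] at this
      exact (mul_eq_left₀ hI).mp this
    rw [(mFourier_apply_eq_one_iff n y).mpr (h n ((mFourier_apply_eq_one_iff n x).mp hx)), mul_one]
  have hmap : μ.map (fun h : H => (h : UnitAddTorus d) + y) = μ.map (↑) := by
    refine Measure.ext_of_integral_eq_of_dense_span (s := Set.range mFourier)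
      (Submodule.dense_iff_topologicalClosure_eq_top.mpr span_mFourier_closure_eq_top) ?_
    rintro - ⟨n, rfl⟩
    rw [integral_map (by fun_prop) (by fun_prop), integral_map (by fun_prop) (by fun_prop)]
    exact hchar n
  have := congr($hmap (H : Set (UnitAddTorus d)))
  rw [Measure.map_apply (by fun_prop) hH.measurableSet,
    Measure.map_apply (by fun_prop) hH.measurableSet] at this
  have hempty : (fun h : H => (h : UnitAddTorus d) + y) ⁻¹' H = ∅ :=
    Set.eq_empty_of_forall_notMem fun h hh =>
      hy (by simpa using H.sub_mem hh h.2 : y ∈ H)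
  rw [hempty, Subtype.coe_preimage_self, measure_empty, measure_univ] at this
  exact zero_ne_one this

end UnitAddTorus

theorem mem_closure_zmultiples_pi_of_forall_sum_eq_zero {ι : Type*} {x y : ι → UnitAddCircle}
    (h : ∀ (I : Finset ι) (n : I → ℤ), ∑ i, n i • x i = 0 → ∑ i, n i • y i = 0) :
    y ∈ closure (AddSubgroup.zmultiples x : Set (ι → UnitAddCircle)) := by
  refine mem_closure_iff_nhds.mpr fun U hU => ?_
  rw [nhds_pi, Filter.mem_pi'] at hU
  obtain ⟨I, t, ht, hIU⟩ := hU
  have hI := UnitAddTorus.mem_closure_zmultiples_of_forall_sum_eq_zero (h I)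
  obtain ⟨-, hz, m, rfl⟩ := mem_closure_iff_nhds.mp hI (Set.univ.pi fun i => t i)
    (set_pi_mem_nhds Set.finite_univ fun i _ => ht i)
  exact ⟨m • x, hIU fun i hi => hz ⟨i, hi⟩ trivial, m, rfl⟩

lemma tauZ_eq_induced (S : AddSubgroup UnitAddCircle) :
    tauZ S = TopologicalSpace.induced (fun n : ℤ => fun t : S => n • (t : UnitAddCircle))
      Pi.topologicalSpace := by
  rw [Pi.topologicalSpace, induced_iInf, tauZ, iInf_subtype']
  simp only [induced_compose]
  rfl

lemma mem_closure_tauZ_zmultiples {S : AddSubgroup UnitAddCircle} {k e : ℤ}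
    (h : ∀ s ∈ S, k • s = 0 → e • s = 0) :
    e ∈ @closure ℤ (tauZ S) (AddSubgroup.zmultiples k) := by
  let _ : TopologicalSpace ℤ := tauZ S
  let φ : ℤ →+ (S → UnitAddCircle) := zmultiplesHom _ fun t => (t : UnitAddCircle)
  have hφ : Topology.IsInducing φ := ⟨tauZ_eq_induced S⟩
  rw [hφ.closure_eq_preimage_closure_image, ← AddSubgroup.coe_map, AddMonoidHom.map_zmultiples]
  refine mem_closure_zmultiples_pi_of_forall_sum_eq_zero fun I n hn => ?_
  have hs : ∑ i, n i • (i : UnitAddCircle) ∈ S := sum_mem fun i _ => S.zsmul_mem i.1.2 _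
  have hsum (m : ℤ) : ∑ i, n i • φ m i = m • ∑ i, n i • (i : UnitAddCircle) := by
    simp only [φ, zmultiplesHom_apply, Pi.smul_apply, Finset.smul_sum, smul_comm m]
  rw [hsum] at hn ⊢
  exact h _ hs hn

lemma zsmul_coe_inv_natCast_eq_zero_iff {k : ℕ} (hk : 0 < k) {n : ℤ} :
    n • (((k : ℝ)⁻¹ : ℝ) : UnitAddCircle) = 0 ↔ (k : ℤ) ∣ n := by
  rw [← addOrderOf_dvd_iff_zsmul_eq_zero, ← one_div, AddCircle.addOrderOf_period_div hk]

lemma mem_zmultiples_coe_inv_natCast_of_nsmul_eq_zero {k : ℕ} (hk : 0 < k) {s : UnitAddCircle}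
    (hs : k • s = 0) : s ∈ AddSubgroup.zmultiples (((k : ℝ)⁻¹ : ℝ) : UnitAddCircle) := by
  obtain ⟨m, -, rfl⟩ := (AddCircle.nsmul_eq_zero_iff hk).mp hs
  refine ⟨m, ?_⟩
  simp only [← AddCircle.coe_zsmul, zsmul_eq_mul, Int.cast_natCast, div_eq_mul_inv, mul_one]

lemma isClosed_tauZ_zmultiples_of_coe_inv_mem {S : AddSubgroup UnitAddCircle} {k : ℕ}
    (hk : 0 < k) (hS : (((k : ℝ)⁻¹ : ℝ) : UnitAddCircle) ∈ S) :
    IsClosed[tauZ S] (AddSubgroup.zmultiples (k : ℤ) : Set ℤ) := by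
  have hle : tauZ S ≤ TopologicalSpace.induced
      (fun n : ℤ => n • (((k : ℝ)⁻¹ : ℝ) : UnitAddCircle)) inferInstance :=
    iInf₂_le _ hS
  refine IsClosed.mono (isClosed_induced_iff.mpr ⟨{0}, isClosed_singleton, ?_⟩) hle
  ext n
  simp [zsmul_coe_inv_natCast_eq_zero_iff hk, Int.mem_zmultiples_iff]

lemma coe_inv_mem_of_isClosed_tauZ_zmultiples {S : AddSubgroup UnitAddCircle} {k : ℕ}
    (hk : 0 < k) (hclosed : IsClosed[tauZ S] (AddSubgroup.zmultiples (k : ℤ) : Set ℤ)) :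
    (((k : ℝ)⁻¹ : ℝ) : UnitAddCircle) ∈ S := by
  set u : UnitAddCircle := (((k : ℝ)⁻¹ : ℝ) : UnitAddCircle)
  obtain ⟨d, hd⟩ := Int.subgroup_cyclic (S.comap (zmultiplesHom _ u))
  rw [← AddSubgroup.zmultiples_eq_closure] at hd
  have hmem (j : ℤ) : j • u ∈ S ↔ d ∣ j := by
    rw [← zmultiplesHom_apply, ← AddSubgroup.mem_comap, hd, Int.mem_zmultiples_iff]
  have hku : (k : ℤ) • u = 0 := (zsmul_coe_inv_natCast_eq_zero_iff hk).mpr dvd_rfl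
  obtain ⟨e, he⟩ : d ∣ k := (hmem k).mp (hku ▸ S.zero_mem)
  have hkill (s : UnitAddCircle) (hs : s ∈ S) (hks : (k : ℤ) • s = 0) : e • s = 0 := by
    obtain ⟨j, rfl⟩ := mem_zmultiples_coe_inv_natCast_of_nsmul_eq_zero hk (by exact_mod_cast hks)
    obtain ⟨c, rfl⟩ := (hmem j).mp hs
    rw [smul_smul, show e * (d * c) = c * k by rw [he]; ring, mul_smul, hku, smul_zero]
  have he_mem : e ∈ AddSubgroup.zmultiples (k : ℤ) := by
    rw [← SetLike.mem_coe, ← @IsClosed.closure_eq _ (tauZ S) _ hclosed]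
    exact mem_closure_tauZ_zmultiples hkill
  obtain ⟨c, hc⟩ := Int.mem_zmultiples_iff.mp he_mem
  have hdc : d * c = 1 := by
    refine mul_left_cancel₀ (show (k : ℤ) ≠ 0 by omega) ?_
    linear_combination -he - d * hc
  simpa using (hmem 1).mpr ⟨c, hdc.symm⟩

theorem stmt19 (S : AddSubgroup (AddCircle (1 : ℝ))) (k : ℤ) (hk : 1 ≤ k) :
    @IsClosed ℤ (tauZ S) ((AddSubgroup.zmultiples k : AddSubgroup ℤ) : Set ℤ) ↔
      (↑((k : ℝ)⁻¹) : AddCircle (1 : ℝ)) ∈ S := by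
  lift k to ℕ using by omega
  have hk₀ : 0 < k := by omega
  rw [Int.cast_natCast]
  exact ⟨coe_inv_mem_of_isClosed_tauZ_zmultiples hk₀, isClosed_tauZ_zmultiples_of_coe_inv_mem hk₀⟩
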